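/- arXiv:2010.07431 — 2 statements merged into one kernel-verified Lean document; each statement's English description precedes it below -/
import Mathlib

section
/- Assume the feasible family F is nonempty. Then the family 𝓕̃ of all extendable subsets of V is (the independent-set family of) a matroid on V; that is: (i) 𝓕̃ ≠ ∅; (ii) if A ⊆ B and B ∈ 𝓕̃ then A ∈ 𝓕̃; and (iii) if A, B ∈ 𝓕̃ with |A| < |B|, then there exists e ∈ B \ A such that A ∪ {e} ∈ 𝓕̃. -/
/-!
A set `S ⊆ V` is extendable exactly when it respects the upper bounds and its *demand*
`∑_c max(ℓ_c, |S ∩ V_c|)` is at most `k`: the demand is the size of the smallest feasible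
superset, obtained by topping up each deficient colour class to `ℓ_c` (possible because some
feasible set exists). For augmentation, add an element of `B \ A` from a colour `c` with
`|A ∩ V_c| < |B ∩ V_c|`, preferring a colour where `A` is still below `ℓ_c`, since there the
demand does not grow. If no such colour exists, then `demand A < demand B ≤ k`, so growing the
demand by one is harmless.
-/

open Finset Function

/-- The feasible family `F`: subsets of `V` of size at most `k` whose intersection with
each color class `Vc c` has cardinality between `ℓ c` and `u c`. -/
def Feasible {α : Type*} [DecidableEq α] {C : ℕ} (V : Finset α) (Vc : Fin C → Finset α)
    (ℓ u : Fin C → ℕ) (k : ℕ) (S : Finset α) : Prop :=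
  S ⊆ V ∧ S.card ≤ k ∧ ∀ c, ℓ c ≤ (S ∩ Vc c).card ∧ (S ∩ Vc c).card ≤ u c

/-- A set is extendable if it is contained in some feasible set. -/
def Extendable {α : Type*} [DecidableEq α] {C : ℕ} (V : Finset α) (Vc : Fin C → Finset α)
    (ℓ u : Fin C → ℕ) (k : ℕ) (S : Finset α) : Prop :=
  ∃ S', Feasible V Vc ℓ u k S' ∧ S ⊆ S'

section Demand

variable {ι : Type*} [Fintype ι] {ℓ a b : ι → ℕ} {k : ℕ}

def demand (ℓ a : ι → ℕ) : ℕ := ∑ c, max (ℓ c) (a c)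

lemma demand_update_succ [DecidableEq ι] (ℓ a : ι → ℕ) (c : ι) :
    demand ℓ (update a c (a c + 1)) + max (ℓ c) (a c) = demand ℓ a + max (ℓ c) (a c + 1) := by
  unfold demand
  rw [← add_sum_erase _ _ (mem_univ c), ← add_sum_erase _ _ (mem_univ c),
    sum_congr rfl fun d hd => by rw [update_of_ne (ne_of_mem_erase hd)]]
  simp only [update_self]
  ring

lemma demand_lt_demand (hle : ∀ c, a c < b c → ℓ c ≤ a c) (hlt : ∑ c, a c < ∑ c, b c) :
    demand ℓ a < demand ℓ b := by
  have hpointwise : ∀ c ∈ univ, max (ℓ c) (a c) + b c ≤ max (ℓ c) (b c) + a c := by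
    intro c _
    have := hle c
    omega
  have := sum_le_sum hpointwise
  rw [sum_add_distrib, sum_add_distrib] at this
  unfold demand
  omega

lemma exists_lt_demand_update_le [DecidableEq ι] (ha : demand ℓ a ≤ k) (hb : demand ℓ b ≤ k)
    (hlt : ∑ c, a c < ∑ c, b c) : ∃ c, a c < b c ∧ demand ℓ (update a c (a c + 1)) ≤ k := by
  by_cases hdeficient : ∃ c, a c < b c ∧ a c < ℓ c
  · obtain ⟨c, hab, haℓ⟩ := hdeficient
    have := demand_update_succ ℓ a c
    exact ⟨c, hab, by omega⟩
  · push Not at hdeficient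
    obtain ⟨c, -, hab⟩ := exists_lt_of_sum_lt hlt
    have := demand_update_succ ℓ a c
    have := demand_lt_demand hdeficient hlt
    have := hdeficient c hab
    exact ⟨c, hab, by omega⟩

end Demand

section ColorClasses

variable {ι α : Type*} [DecidableEq α] {Vc : ι → Finset α}

def colorCount (Vc : ι → Finset α) (S : Finset α) (c : ι) : ℕ := #(S ∩ Vc c)

lemma colorCount_mono {S T : Finset α} (h : S ⊆ T) : colorCount Vc S ≤ colorCount Vc T :=
  fun _ => card_le_card (inter_subset_inter_right h)

lemma card_eq_sum_colorCount [Fintype ι] (hdisj : Pairwise (Disjoint on Vc)) {S : Finset α}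
    (hS : S ⊆ univ.biUnion Vc) : #S = ∑ c, colorCount Vc S c := by
  conv_lhs => rw [← inter_eq_left.2 hS, inter_biUnion]
  rw [card_biUnion]
  · rfl
  · exact fun c _ d _ hcd => (hdisj hcd).mono inter_subset_right inter_subset_right

lemma biUnion_inter_eq [Fintype ι] (hdisj : Pairwise (Disjoint on Vc)) {T : ι → Finset α}
    (hT : ∀ c, T c ⊆ Vc c) (c : ι) : univ.biUnion T ∩ Vc c = T c := by
  ext x
  simp only [mem_inter, mem_biUnion, mem_univ, true_and]
  refine ⟨fun ⟨⟨d, hxd⟩, hxc⟩ => ?_, fun hx => ⟨⟨c, hx⟩, hT c hx⟩⟩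
  obtain rfl | hdc := eq_or_ne d c
  · exact hxd
  · exact absurd hxc (disjoint_left.1 (hdisj hdc) (hT d hxd))

lemma colorCount_insert [DecidableEq ι] (hdisj : Pairwise (Disjoint on Vc)) {A : Finset α}
    {e : α} {c : ι} (hec : e ∈ Vc c) (heA : e ∉ A) :
    colorCount Vc (insert e A) = update (colorCount Vc A) c (colorCount Vc A c + 1) := by
  funext d
  obtain rfl | hdc := eq_or_ne d c
  · rw [update_self, colorCount, insert_inter_of_mem hec,
      card_insert_of_notMem fun h => heA (mem_of_mem_inter_left h), colorCount]
  · rw [update_of_ne hdc, colorCount, colorCount,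
      insert_inter_of_notMem fun h => disjoint_left.1 (hdisj hdc) h hec]

lemma exists_mem_sdiff_of_colorCount_lt {A B : Finset α} {c : ι}
    (h : colorCount Vc A c < colorCount Vc B c) : ∃ e ∈ B \ A, e ∈ Vc c := by
  obtain ⟨e, he, heA⟩ := not_subset.1 fun hsub => (card_le_card hsub).not_gt h
  rw [mem_inter] at he
  exact ⟨e, mem_sdiff.2 ⟨he.1, fun heA' => heA (mem_inter.2 ⟨heA', he.2⟩)⟩, he.2⟩

end ColorClasses

lemma extendable_iff {α : Type*} [DecidableEq α] {C : ℕ} {V : Finset α} {Vc : Fin C → Finset α}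
    {ℓ u : Fin C → ℕ} {k : ℕ} (hV : V ⊆ univ.biUnion Vc) (hdisj : Pairwise (Disjoint on Vc))
    (hne : ∃ S, Feasible V Vc ℓ u k S) (S : Finset α) :
    Extendable V Vc ℓ u k S ↔
      S ⊆ V ∧ colorCount Vc S ≤ u ∧ demand ℓ (colorCount Vc S) ≤ k := by
  constructor
  · rintro ⟨S', ⟨hS'V, hS'k, hS'c⟩, hSS'⟩
    refine ⟨hSS'.trans hS'V, (colorCount_mono hSS').trans fun c => (hS'c c).2, ?_⟩
    calc demand ℓ (colorCount Vc S)
        ≤ ∑ c, colorCount Vc S' c :=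
          sum_le_sum fun c _ => max_le (hS'c c).1 (colorCount_mono hSS' c)
      _ = #S' := (card_eq_sum_colorCount hdisj (hS'V.trans hV)).symm
      _ ≤ k := hS'k
  · rintro ⟨hSV, hSu, hSk⟩
    obtain ⟨S₀, hS₀V, -, hS₀c⟩ := hne
    have hfill : ∀ c, ∃ T, S ∩ Vc c ⊆ T ∧ T ⊆ V ∩ Vc c ∧ #T = max (ℓ c) (colorCount Vc S c) :=
      fun c => exists_subsuperset_card_eq (inter_subset_inter_right hSV) (le_max_right _ _)
        (max_le ((hS₀c c).1.trans (card_le_card (inter_subset_inter_right hS₀V)))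
          (card_le_card (inter_subset_inter_right hSV)))
    choose T hST hTV hTcard using hfill
    have hTVc : ∀ c, T c ⊆ Vc c := fun c => (hTV c).trans inter_subset_right
    refine ⟨univ.biUnion T, ⟨?_, ?_, fun c => ?_⟩, ?_⟩
    · exact biUnion_subset.2 fun c _ => (hTV c).trans inter_subset_left
    · exact card_biUnion_le.trans ((sum_le_sum fun c _ => (hTcard c).le).trans hSk)
    · rw [biUnion_inter_eq hdisj hTVc, hTcard]
      exact ⟨le_max_left _ _, max_le ((hS₀c c).1.trans (hS₀c c).2) (hSu c)⟩
    · intro x hx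
      obtain ⟨c, -, hxc⟩ := mem_biUnion.1 (hV (hSV hx))
      exact mem_biUnion.2 ⟨c, mem_univ c, hST c (mem_inter.2 ⟨hx, hxc⟩)⟩

theorem extendable_is_matroid_general {α : Type*} [DecidableEq α] (C : ℕ) (V : Finset α)
    (Vc : Fin C → Finset α)
    (hV : V = Finset.univ.biUnion Vc)
    (hdisj : ∀ c d : Fin C, c ≠ d → Disjoint (Vc c) (Vc d))
    (ℓ u : Fin C → ℕ) (k : ℕ)
    (hne : ∃ S, Feasible V Vc ℓ u k S) :
    (∃ S : Finset α, Extendable V Vc ℓ u k S) ∧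
    (∀ A B : Finset α, A ⊆ B → Extendable V Vc ℓ u k B → Extendable V Vc ℓ u k A) ∧
    (∀ A B : Finset α, Extendable V Vc ℓ u k A → Extendable V Vc ℓ u k B →
      A.card < B.card → ∃ e ∈ B \ A, Extendable V Vc ℓ u k (insert e A)) := by
  have hdisj' : Pairwise (Disjoint on Vc) := fun c d => hdisj c d
  refine ⟨?_, ?_, ?_⟩
  · obtain ⟨S, hS⟩ := hne
    exact ⟨S, S, hS, Subset.rfl⟩
  · rintro A B hAB ⟨S', hS', hBS'⟩
    exact ⟨S', hS', hAB.trans hBS'⟩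
  · intro A B hA hB hcard
    simp only [extendable_iff hV.subset hdisj' hne] at hA hB ⊢
    obtain ⟨hAV, hAu, hAk⟩ := hA
    obtain ⟨hBV, hBu, hBk⟩ := hB
    rw [card_eq_sum_colorCount hdisj' (hAV.trans hV.subset),
      card_eq_sum_colorCount hdisj' (hBV.trans hV.subset)] at hcard
    obtain ⟨c, hc, hk⟩ := exists_lt_demand_update_le hAk hBk hcard
    obtain ⟨e, he, hec⟩ := exists_mem_sdiff_of_colorCount_lt hc
    rw [mem_sdiff] at he
    refine ⟨e, mem_sdiff.2 he, insert_subset (hBV he.1) hAV, ?_, ?_⟩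
    · rw [colorCount_insert hdisj' hec he.2, update_le_iff]
      exact ⟨hc.trans_le (hBu c), fun d _ => hAu d⟩
    · rwa [colorCount_insert hdisj' hec he.2]

/-- The family of extendable subsets of `V` satisfies the independent-set axioms of
a matroid: nonemptiness, downward closure, and the augmentation property. -/
theorem extendable_is_matroid {α : Type*} [DecidableEq α] (C : ℕ) (V : Finset α)
    (Vc : Fin C → Finset α)
    (hV : V = Finset.univ.biUnion Vc)
    (hdisj : ∀ c d : Fin C, c ≠ d → Disjoint (Vc c) (Vc d))
    (ℓ u : Fin C → ℕ) (hlu : ∀ c, ℓ c ≤ u c) (k : ℕ)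
    (hne : ∃ S, Feasible V Vc ℓ u k S) :
    (∃ S : Finset α, Extendable V Vc ℓ u k S) ∧
    (∀ A B : Finset α, A ⊆ B → Extendable V Vc ℓ u k B → Extendable V Vc ℓ u k A) ∧
    (∀ A B : Finset α, Extendable V Vc ℓ u k A → Extendable V Vc ℓ u k B →
      A.card < B.card → ∃ e ∈ B \ A, Extendable V Vc ℓ u k (insert e A)) :=
  extendable_is_matroid_general C V Vc hV hdisj ℓ u k hne
end

section
/- Assume the feasible family F is nonempty and let f : 2^V → ℝ be a non-negative monotone submodular function with f(∅) = 0. Let g₁,…,g_m ∈ V be distinct elements such that for every j = 1,…,m the prefix G_j = {g₁,…,g_j} is extendable, g_j maximizes the marginal gain f(e | G_{j−1}) over all e ∈ V for which G_{j−1} ∪ {e} is extendable, and no e ∈ V \ G_m has G_m ∪ {e} extendable. Then G_m ∈ F and 2 f(G_m) ≥ f(O) for every O ∈ F. -/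
/-!
A set `S ⊆ V` is extendable exactly when it respects the upper bounds `u c` and
`∑ c, max |S ∩ V_c| ℓ_c ≤ k`, since the smallest feasible superset of `S` tops every colour class
up to its lower bound. From this description the extendable sets satisfy the matroid
augmentation axiom, and a maximal extendable set meets every lower bound, so the greedy set `G`
is feasible. For `O ∈ F`, augmentation and Hall's theorem match the elements `o ∈ O \ G`
injectively with steps `j` such that `G_{j-1} ∪ {o}` is extendable. The greedy choice and
submodularity then give `f(o | G) ≤ f(g_j | G_{j-1})`, and summing,
`f(O) ≤ f(G) + ∑_o f(o | G) ≤ f(G) + ∑_j f(g_j | G_{j-1}) = 2 f(G)`.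
-/

open Finset

/-- `prefixImage m g j = {g i : i < j}`, the set of the first `j` elements of the
sequence `g`. -/
def prefixImage {α : Type*} [DecidableEq α] (m : ℕ) (g : Fin m → α) (j : ℕ) : Finset α :=
  (Finset.univ.filter fun i : Fin m => (i : ℕ) < j).image g

open Function

section Prefix

variable {α : Type*} [DecidableEq α] {m : ℕ} (g : Fin m → α)

@[simp]
lemma prefixImage_zero : prefixImage m g 0 = ∅ := by
  simp [prefixImage]

lemma prefixImage_mono : Monotone (prefixImage m g) := fun _ _ hjj' =>
  image_subset_image fun _ => by simp only [mem_filter, mem_univ, true_and]; omega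

lemma prefixImage_succ (j : Fin m) :
    prefixImage m g (j + 1) = insert (g j) (prefixImage m g j) := by
  rw [prefixImage, prefixImage, ← image_insert]
  congr 1
  ext i
  simp only [mem_filter, mem_univ, true_and, mem_insert, Fin.ext_iff]
  omega

lemma prefixImage_subset {V : Finset α} (hgV : ∀ j, g j ∈ V) (j : ℕ) :
    prefixImage m g j ⊆ V :=
  image_subset_iff.mpr fun i _ => hgV i

variable {g}

lemma card_prefixImage (hg : Injective g) {j : ℕ} (hj : j ≤ m) :
    #(prefixImage m g j) = j := by
  rw [prefixImage, card_image_of_injective _ hg, Fin.card_filter_val_lt, min_eq_right hj]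

end Prefix

section Submodular

variable {α : Type*} [DecidableEq α]

def marginal (f : Finset α → ℝ) (e : α) (S : Finset α) : ℝ := f (insert e S) - f S

def SubmodularOn (V : Finset α) (f : Finset α → ℝ) : Prop :=
  ∀ X Y : Finset α, X ⊆ Y → Y ⊆ V → ∀ e ∈ V, e ∉ Y → marginal f e Y ≤ marginal f e X

lemma SubmodularOn.le_add_sum_marginal {V : Finset α} {f : Finset α → ℝ}
    (hf : SubmodularOn V f) {G D : Finset α} (hGV : G ⊆ V) (hDV : D ⊆ V)
    (hGD : Disjoint G D) : f (G ∪ D) ≤ f G + ∑ e ∈ D, marginal f e G := by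
  induction D using Finset.induction_on with
  | empty => simp
  | insert a D haD ih =>
    have haV : a ∈ V := hDV (mem_insert_self a D)
    have hDV' : D ⊆ V := (subset_insert a D).trans hDV
    have haG : a ∉ G := disjoint_right.mp hGD (mem_insert_self a D)
    have hdiminish : marginal f a (G ∪ D) ≤ marginal f a G :=
      hf G (G ∪ D) subset_union_left (union_subset hGV hDV') a haV (by simp [haG, haD])
    have hprev := ih hDV' (disjoint_of_subset_right (subset_insert a D) hGD)
    rw [union_insert, sum_insert haD]
    unfold marginal at hdiminish hprev ⊢
    linarith

lemma SubmodularOn.le_add_sum_marginal_sdiff {V : Finset α} {f : Finset α → ℝ}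
    (hf : SubmodularOn V f) (hmono : ∀ X Y : Finset α, X ⊆ Y → Y ⊆ V → f X ≤ f Y)
    {G O : Finset α} (hGV : G ⊆ V) (hOV : O ⊆ V) :
    f O ≤ f G + ∑ e ∈ O \ G, marginal f e G := calc
  f O ≤ f (G ∪ O \ G) :=
      hmono _ _ (by rw [union_sdiff_self_eq_union]; exact subset_union_right)
        (union_subset hGV (sdiff_subset.trans hOV))
  _ ≤ f G + ∑ e ∈ O \ G, marginal f e G :=
      hf.le_add_sum_marginal hGV (sdiff_subset.trans hOV) disjoint_sdiff

lemma sum_marginal_prefixImage (f : Finset α → ℝ) {m : ℕ} (g : Fin m → α) :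
    ∑ j : Fin m, marginal f (g j) (prefixImage m g j) = f (prefixImage m g m) - f ∅ := by
  simp only [marginal, ← prefixImage_succ]
  rw [Fin.sum_univ_eq_sum_range (fun j => f (prefixImage m g (j + 1)) - f (prefixImage m g j)),
    sum_range_sub (fun j => f (prefixImage m g j)), prefixImage_zero]

end Submodular

section Greedy

variable {α : Type*} [DecidableEq α]

def HasAugmentation (I : Finset α → Prop) : Prop :=
  ∀ ⦃S T : Finset α⦄, I S → I T → #S < #T → ∃ e ∈ T \ S, I (insert e S)

variable {I : Finset α → Prop}

lemma HasAugmentation.card_le (hI : HasAugmentation I) {S Q : Finset α} (hS : I S) (hQ : I Q)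
    (hQS : ∀ e ∈ Q, ¬ I (insert e S)) : #Q ≤ #S := by
  by_contra! hlt
  obtain ⟨e, he, hins⟩ := hI hS hQ hlt
  exact hQS e (mem_sdiff.mp he).1 hins

/-- Hall's condition holds because the steps at which `o` can still be added form an initial
segment of `Fin m`: if the union of these segments over `s` has `n` elements, no element of `s`
can be added to the prefix of length `n`, so `#s ≤ n` by augmentation. -/
lemma HasAugmentation.exists_injective_prefix (hdown : IsLowerSet {S | I S})
    (hI : HasAugmentation I) {m : ℕ} {g : Fin m → α} (hg : Injective g)
    (hG : I (prefixImage m g m)) {O : Finset α} (hO : I O)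
    (hstop : ∀ e ∈ O \ prefixImage m g m, ¬ I (insert e (prefixImage m g m))) :
    ∃ π : (O \ prefixImage m g m : Finset α) → Fin m, Injective π ∧
      ∀ o, I (insert o.1 (prefixImage m g (π o))) := by
  classical
  let t : (O \ prefixImage m g m : Finset α) → Finset (Fin m) :=
    fun o => {j | I (insert o.1 (prefixImage m g j))}
  suffices hHall : ∀ s, #s ≤ #(s.biUnion t) by
    obtain ⟨π, hπ, hπt⟩ := (all_card_le_biUnion_card_iff_exists_injective t).mp hHall
    exact ⟨π, hπ, fun o => (mem_filter.mp (hπt o)).2⟩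
  intro s
  set N := s.biUnion t
  have hNm : #N ≤ m := card_le_univ N |>.trans_eq (Fintype.card_fin m)
  have hblocked : ∀ o ∈ s, ¬ I (insert o.1 (prefixImage m g #N)) := by
    intro o ho hins
    rcases hNm.lt_or_eq with hlt | heq
    · have hIic : Iic (⟨#N, hlt⟩ : Fin m) ⊆ N := fun j hj =>
        mem_biUnion.mpr ⟨o, ho, mem_filter.mpr ⟨mem_univ j,
          hdown (insert_subset_insert _ (prefixImage_mono g (Fin.le_def.mp (mem_Iic.mp hj)))) hins⟩⟩
      simpa using card_le_card hIic
    · exact hstop o.1 o.2 (by rwa [heq] at hins)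
  have hsO : s.map (Embedding.subtype _) ⊆ O := fun x hx => by
    obtain ⟨o, -, rfl⟩ := mem_map.mp hx
    exact (mem_sdiff.mp o.2).1
  calc #s = #(s.map (Embedding.subtype _)) := (card_map _).symm
    _ ≤ #(prefixImage m g #N) :=
      hI.card_le (hdown (prefixImage_mono g hNm) hG) (hdown hsO hO) fun e he => by
        obtain ⟨o, ho, rfl⟩ := mem_map.mp he
        exact hblocked o ho
    _ = #N := card_prefixImage hg hNm

theorem HasAugmentation.le_two_mul_greedy (hdown : IsLowerSet {S | I S})
    (hI : HasAugmentation I) {V : Finset α} {f : Finset α → ℝ}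
    (hmono : ∀ X Y : Finset α, X ⊆ Y → Y ⊆ V → f X ≤ f Y) (hsub : SubmodularOn V f)
    (hzero : f ∅ = 0) {m : ℕ} {g : Fin m → α} (hg : Injective g) (hgV : ∀ j, g j ∈ V)
    (hG : I (prefixImage m g m))
    (hgreedy : ∀ j : Fin m, ∀ e ∈ V, I (insert e (prefixImage m g j)) →
      marginal f e (prefixImage m g j) ≤ marginal f (g j) (prefixImage m g j))
    (hstop : ∀ e ∈ V \ prefixImage m g m, ¬ I (insert e (prefixImage m g m)))
    {O : Finset α} (hO : I O) (hOV : O ⊆ V) :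
    f O ≤ 2 * f (prefixImage m g m) := by
  set G := prefixImage m g m
  have hGV : G ⊆ V := prefixImage_subset g hgV m
  obtain ⟨π, hπ, hπI⟩ := hI.exists_injective_prefix hdown hg hG hO
    fun e he => hstop e (mem_sdiff.mpr ⟨hOV (mem_sdiff.mp he).1, (mem_sdiff.mp he).2⟩)
  have hmatch (o : (O \ G : Finset α)) :
      marginal f o G ≤ marginal f (g (π o)) (prefixImage m g (π o)) :=
    have hoO := mem_sdiff.mp o.2
    (hsub _ _ (prefixImage_mono g (π o).2.le) hGV o (hOV hoO.1) hoO.2).trans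
      (hgreedy (π o) o (hOV hoO.1) (hπI o))
  have hgain (j : Fin m) : 0 ≤ marginal f (g j) (prefixImage m g j) :=
    sub_nonneg.mpr <| hmono _ _ (subset_insert _ _)
      (insert_subset (hgV j) (prefixImage_subset g hgV j))
  have hsum : ∑ o ∈ O \ G, marginal f o G ≤ f G := calc
    _ = ∑ o : (O \ G : Finset α), marginal f o G := (sum_coe_sort _ _).symm
    _ ≤ ∑ o : (O \ G : Finset α), marginal f (g (π o)) (prefixImage m g (π o)) :=
        sum_le_sum fun o _ => hmatch o
    _ = ∑ j ∈ univ.image π, marginal f (g j) (prefixImage m g j) :=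
        (sum_image (f := fun j => marginal f (g j) (prefixImage m g j))
          fun _ _ _ _ h => hπ h).symm
    _ ≤ ∑ j : Fin m, marginal f (g j) (prefixImage m g j) := sum_le_univ_sum_of_nonneg hgain
    _ = f G := by rw [sum_marginal_prefixImage, hzero, sub_zero]
  linarith [hsub.le_add_sum_marginal_sdiff hmono hGV hOV]

end Greedy

section ColorConstraints

variable {α : Type*} [DecidableEq α] {C : ℕ} {V : Finset α} {Vc : Fin C → Finset α}
  {ℓ u : Fin C → ℕ} {k : ℕ} {S T : Finset α}

def completionCard (Vc : Fin C → Finset α) (ℓ : Fin C → ℕ) (S : Finset α) : ℕ :=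
  ∑ c, max #(S ∩ Vc c) (ℓ c)

lemma Extendable.subset_ground (hS : Extendable V Vc ℓ u k S) : S ⊆ V :=
  let ⟨_, hS', hSS'⟩ := hS
  hSS'.trans hS'.1

lemma isLowerSet_extendable : IsLowerSet {S | Extendable V Vc ℓ u k S} :=
  fun _ _ hTS ⟨S', hS', hSS'⟩ => ⟨S', hS', hTS.trans hSS'⟩

lemma card_eq_sum_card_inter (hV : V = univ.biUnion Vc) (hdisj : Pairwise (Disjoint on Vc))
    (hS : S ⊆ V) : #S = ∑ c, #(S ∩ Vc c) := by
  calc #S = #(S ∩ V) := by rw [inter_eq_left.mpr hS]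
    _ = ∑ c, #(S ∩ Vc c) := by
        rw [hV, inter_biUnion, card_biUnion fun c _ d _ hcd =>
          (hdisj hcd).mono inter_subset_right inter_subset_right]

lemma exists_superset_card_inter_eq_max (hV : V = univ.biUnion Vc)
    (hdisj : Pairwise (Disjoint on Vc)) (hVl : ∀ c, ℓ c ≤ #(Vc c)) (hS : S ⊆ V) :
    ∃ S', S ⊆ S' ∧ S' ⊆ V ∧ ∀ c, #(S' ∩ Vc c) = max #(S ∩ Vc c) (ℓ c) := by
  choose T hST hTV hTcard using fun c => exists_subsuperset_card_eq inter_subset_right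
    (le_max_left #(S ∩ Vc c) (ℓ c)) (max_le (card_le_card inter_subset_right) (hVl c))
  have hTinter : ∀ d, univ.biUnion T ∩ Vc d = T d := by
    intro d
    ext x
    simp only [mem_inter, mem_biUnion, mem_univ, true_and]
    refine ⟨fun ⟨⟨c, hxc⟩, hxd⟩ => ?_, fun hx => ⟨⟨d, hx⟩, hTV d hx⟩⟩
    obtain rfl : c = d := by_contra fun hcd => disjoint_left.mp (hdisj hcd) (hTV c hxc) hxd
    exact hxc
  refine ⟨univ.biUnion T, fun x hx => ?_, ?_, fun d => by rw [hTinter, hTcard]⟩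
  · obtain ⟨c, -, hxc⟩ := mem_biUnion.mp (hV ▸ hS hx)
    exact mem_biUnion.mpr ⟨c, mem_univ c, hST c (mem_inter.mpr ⟨hx, hxc⟩)⟩
  · rw [hV]
    exact biUnion_mono fun c _ => hTV c

lemma extendable_iff_s9 (hV : V = univ.biUnion Vc) (hdisj : Pairwise (Disjoint on Vc))
    (hlu : ∀ c, ℓ c ≤ u c) (hVl : ∀ c, ℓ c ≤ #(Vc c)) (hS : S ⊆ V) :
    Extendable V Vc ℓ u k S ↔ (∀ c, #(S ∩ Vc c) ≤ u c) ∧ completionCard Vc ℓ S ≤ k := by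
  constructor
  · rintro ⟨S', ⟨hS'V, hS'k, hS'c⟩, hSS'⟩
    have hle : ∀ c, #(S ∩ Vc c) ≤ #(S' ∩ Vc c) := fun c =>
      card_le_card (inter_subset_inter_right hSS')
    refine ⟨fun c => (hle c).trans (hS'c c).2, ?_⟩
    calc completionCard Vc ℓ S ≤ ∑ c, #(S' ∩ Vc c) :=
          sum_le_sum fun c _ => max_le (hle c) (hS'c c).1
      _ = #S' := (card_eq_sum_card_inter hV hdisj hS'V).symm
      _ ≤ k := hS'k
  · rintro ⟨hu, hk⟩
    obtain ⟨S', hSS', hS'V, hS'c⟩ := exists_superset_card_inter_eq_max hV hdisj hVl hS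
    refine ⟨S', ⟨hS'V, ?_, fun c => ?_⟩, hSS'⟩
    · rw [card_eq_sum_card_inter hV hdisj hS'V, sum_congr rfl fun c _ => hS'c c]
      exact hk
    · rw [hS'c c]
      exact ⟨le_max_right _ _, max_le (hu c) (hlu c)⟩

lemma Extendable.insert_of_card_lt (hV : V = univ.biUnion Vc) (hdisj : Pairwise (Disjoint on Vc))
    (hlu : ∀ c, ℓ c ≤ u c) (hVl : ∀ c, ℓ c ≤ #(Vc c)) (hS : Extendable V Vc ℓ u k S)
    {e : α} {c : Fin C} (he : e ∈ Vc c) (heS : e ∉ S) (hu : #(S ∩ Vc c) < u c)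
    (hroom : #(S ∩ Vc c) < ℓ c ∨ completionCard Vc ℓ S < k) :
    Extendable V Vc ℓ u k (insert e S) := by
  have hSV := hS.subset_ground
  have heV : e ∈ V := hV ▸ mem_biUnion.mpr ⟨c, mem_univ c, he⟩
  obtain ⟨hSu, hSk⟩ := (extendable_iff_s9 hV hdisj hlu hVl hSV).mp hS
  have hother : ∀ d ≠ c, insert e S ∩ Vc d = S ∩ Vc d := fun d hd =>
    insert_inter_of_notMem (disjoint_left.mp (hdisj hd.symm) he)
  have hself : #(insert e S ∩ Vc c) = #(S ∩ Vc c) + 1 := by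
    rw [insert_inter_of_mem he, card_insert_of_notMem fun h => heS (mem_inter.mp h).1]
  have hsplit : ∀ T, completionCard Vc ℓ T =
      max #(T ∩ Vc c) (ℓ c) + ∑ d ∈ univ.erase c, max #(T ∩ Vc d) (ℓ d) := fun T =>
    (add_sum_erase _ _ (mem_univ c)).symm
  have hrest : ∑ d ∈ univ.erase c, max #(insert e S ∩ Vc d) (ℓ d) =
      ∑ d ∈ univ.erase c, max #(S ∩ Vc d) (ℓ d) :=
    sum_congr rfl fun d hd => by rw [hother d (ne_of_mem_erase hd)]
  refine (extendable_iff_s9 hV hdisj hlu hVl (insert_subset heV hSV)).mpr ⟨fun d => ?_, ?_⟩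
  · rcases eq_or_ne d c with rfl | hd
    · omega
    · rw [hother d hd]
      exact hSu d
  · rw [hsplit] at hSk hroom ⊢
    rw [hrest, hself]
    omega

lemma exists_color_card_inter_lt (hV : V = univ.biUnion Vc) (hdisj : Pairwise (Disjoint on Vc))
    (hSV : S ⊆ V) (hTV : T ⊆ V) (hTk : completionCard Vc ℓ T ≤ k) (hST : #S < #T) :
    ∃ c, #(S ∩ Vc c) < #(T ∩ Vc c) ∧ (#(S ∩ Vc c) < ℓ c ∨ completionCard Vc ℓ S < k) := by
  by_contra! hnone
  rw [card_eq_sum_card_inter hV hdisj hSV, card_eq_sum_card_inter hV hdisj hTV] at hST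
  rcases lt_or_ge (completionCard Vc ℓ S) k with hSk | hSk
  · have hle : ∑ c, #(T ∩ Vc c) ≤ ∑ c, #(S ∩ Vc c) :=
      sum_le_sum fun c _ => by have := hnone c; omega
    omega
  · -- `x ↦ max x ℓ_c - x` is antitone and, by `hnone`, vanishes at `|S ∩ V_c|` whenever
    -- `|S ∩ V_c| < |T ∩ V_c|`
    have hle : completionCard Vc ℓ S + ∑ c, #(T ∩ Vc c) ≤
        completionCard Vc ℓ T + ∑ c, #(S ∩ Vc c) := by
      simp only [completionCard, ← sum_add_distrib]
      exact sum_le_sum fun c _ => by have := hnone c; omega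
    omega

lemma hasAugmentation_extendable (hV : V = univ.biUnion Vc) (hdisj : Pairwise (Disjoint on Vc))
    (hlu : ∀ c, ℓ c ≤ u c) (hVl : ∀ c, ℓ c ≤ #(Vc c)) :
    HasAugmentation (Extendable V Vc ℓ u k) := by
  intro S T hS hT hST
  obtain ⟨hTu, hTk⟩ := (extendable_iff_s9 hV hdisj hlu hVl hT.subset_ground).mp hT
  obtain ⟨c, hlt, hroom⟩ :=
    exists_color_card_inter_lt hV hdisj hS.subset_ground hT.subset_ground hTk hST
  obtain ⟨e, heT, heS⟩ := not_subset.mp fun h => hlt.not_ge (card_le_card h)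
  rw [mem_inter] at heT
  have heS' : e ∉ S := fun h => heS (mem_inter.mpr ⟨h, heT.2⟩)
  exact ⟨e, mem_sdiff.mpr ⟨heT.1, heS'⟩,
    hS.insert_of_card_lt hV hdisj hlu hVl heT.2 heS' (hlt.trans_le (hTu c)) hroom⟩

lemma Extendable.feasible_of_maximal (hV : V = univ.biUnion Vc)
    (hdisj : Pairwise (Disjoint on Vc)) (hlu : ∀ c, ℓ c ≤ u c) (hVl : ∀ c, ℓ c ≤ #(Vc c))
    (hS : Extendable V Vc ℓ u k S) (hmax : ∀ e ∈ V \ S, ¬ Extendable V Vc ℓ u k (insert e S)) :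
    Feasible V Vc ℓ u k S := by
  have hSV := hS.subset_ground
  obtain ⟨hu, hk⟩ := (extendable_iff_s9 hV hdisj hlu hVl hSV).mp hS
  have hl : ∀ c, ℓ c ≤ #(S ∩ Vc c) := by
    intro c
    by_contra! hlt
    obtain ⟨e, he, heS⟩ := not_subset.mp fun h : Vc c ⊆ S =>
      hlt.not_ge (by rw [inter_eq_right.mpr h]; exact hVl c)
    have heV : e ∈ V := hV ▸ mem_biUnion.mpr ⟨c, mem_univ c, he⟩
    exact hmax e (mem_sdiff.mpr ⟨heV, heS⟩)
      (hS.insert_of_card_lt hV hdisj hlu hVl he heS (hlt.trans_le (hlu c)) (Or.inl hlt))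
  refine ⟨hSV, ?_, fun c => ⟨hl c, hu c⟩⟩
  rw [card_eq_sum_card_inter hV hdisj hSV]
  exact (sum_le_sum fun c _ => le_max_left _ _).trans hk

end ColorConstraints

theorem fair_greedy_general {α : Type*} [DecidableEq α] (C : ℕ) (V : Finset α)
    (Vc : Fin C → Finset α)
    (hV : V = Finset.univ.biUnion Vc)
    (hdisj : ∀ c d : Fin C, c ≠ d → Disjoint (Vc c) (Vc d))
    (ℓ u : Fin C → ℕ) (hlu : ∀ c, ℓ c ≤ u c) (k : ℕ)
    (hne : ∃ S, Feasible V Vc ℓ u k S)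
    (f : Finset α → ℝ)
    (hmono : ∀ X Y : Finset α, X ⊆ Y → Y ⊆ V → f X ≤ f Y)
    (hsub : ∀ X Y : Finset α, X ⊆ Y → Y ⊆ V → ∀ e ∈ V, e ∉ Y →
      f (insert e X) - f X ≥ f (insert e Y) - f Y)
    (hzero : f ∅ = 0)
    (m : ℕ) (g : Fin m → α)
    (hginj : Function.Injective g) (hgV : ∀ j, g j ∈ V)
    (hext : ∀ j : Fin m, Extendable V Vc ℓ u k (prefixImage m g ((j : ℕ) + 1)))
    (hgreedy : ∀ j : Fin m, ∀ e ∈ V,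
      Extendable V Vc ℓ u k (insert e (prefixImage m g j)) →
      f (insert (g j) (prefixImage m g j)) - f (prefixImage m g j) ≥
      f (insert e (prefixImage m g j)) - f (prefixImage m g j))
    (hstop : ∀ e ∈ V \ prefixImage m g m,
      ¬ Extendable V Vc ℓ u k (insert e (prefixImage m g m))) :
    Feasible V Vc ℓ u k (prefixImage m g m) ∧
      ∀ O, Feasible V Vc ℓ u k O → 2 * f (prefixImage m g m) ≥ f O := by
  obtain ⟨S₀, hS₀⟩ := hne
  have hVl : ∀ c, ℓ c ≤ #(Vc c) := fun c =>
    (hS₀.2.2 c).1.trans (card_le_card inter_subset_right)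
  have hG : Extendable V Vc ℓ u k (prefixImage m g m) := by
    obtain _ | n := m
    · exact ⟨S₀, hS₀, by simp⟩
    · simpa using hext (Fin.last n)
  refine ⟨hG.feasible_of_maximal hV hdisj hlu hVl hstop, fun O hO => ?_⟩
  exact (hasAugmentation_extendable hV hdisj hlu hVl).le_two_mul_greedy isLowerSet_extendable
    hmono hsub hzero hginj hgV hG hgreedy hstop ⟨O, hO, subset_rfl⟩ hO.1

/-- The fair greedy algorithm yields a feasible solution that is a `1/2`-approximation:
if `g₁,…,g_m` are distinct elements of `V` such that every prefix is extendable, each `g j`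
maximizes the marginal gain among elements keeping the prefix extendable, and the final set
cannot be extended, then `G = {g₁,…,g_m}` is feasible and `2 f(G) ≥ f(O)` for every
feasible `O`. -/
theorem fair_greedy {α : Type*} [DecidableEq α] (C : ℕ) (V : Finset α)
    (Vc : Fin C → Finset α)
    (hV : V = Finset.univ.biUnion Vc)
    (hdisj : ∀ c d : Fin C, c ≠ d → Disjoint (Vc c) (Vc d))
    (ℓ u : Fin C → ℕ) (hlu : ∀ c, ℓ c ≤ u c) (k : ℕ)
    (hne : ∃ S, Feasible V Vc ℓ u k S)
    (f : Finset α → ℝ)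
    (hnonneg : ∀ S ⊆ V, 0 ≤ f S)
    (hmono : ∀ X Y : Finset α, X ⊆ Y → Y ⊆ V → f X ≤ f Y)
    (hsub : ∀ X Y : Finset α, X ⊆ Y → Y ⊆ V → ∀ e ∈ V, e ∉ Y →
      f (insert e X) - f X ≥ f (insert e Y) - f Y)
    (hzero : f ∅ = 0)
    (m : ℕ) (g : Fin m → α)
    (hginj : Function.Injective g) (hgV : ∀ j, g j ∈ V)
    (hext : ∀ j : Fin m, Extendable V Vc ℓ u k (prefixImage m g ((j : ℕ) + 1)))
    (hgreedy : ∀ j : Fin m, ∀ e ∈ V,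
      Extendable V Vc ℓ u k (insert e (prefixImage m g j)) →
      f (insert (g j) (prefixImage m g j)) - f (prefixImage m g j) ≥
      f (insert e (prefixImage m g j)) - f (prefixImage m g j))
    (hstop : ∀ e ∈ V \ prefixImage m g m,
      ¬ Extendable V Vc ℓ u k (insert e (prefixImage m g m))) :
    Feasible V Vc ℓ u k (prefixImage m g m) ∧
      ∀ O, Feasible V Vc ℓ u k O → 2 * f (prefixImage m g m) ≥ f O :=
  fair_greedy_general C V Vc hV hdisj ℓ u hlu k hne f hmono hsub hzero m g hginj hgV hext hgreedy
    hstop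
end
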